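/- arXiv:1810.08351 — 3 statements merged into one kernel-verified Lean document; each statement's English description precedes it below -/
import Mathlib

section
/- Let W₁ ∈ ℝ^{n₁×n₀}, W₂ ∈ ℝ^{n₂×n₁}, W₃ ∈ ℝ^{n₃×n₂} be mutually independent random matrices, each with independent and identically distributed entries. Let g = (g₁, g₂, g₃) be a measurable map on triples of matrices of these shapes such that for all permutation matrices P₁ (n₁×n₁) and P₂ (n₂×n₂) and all triples (X₁,X₂,X₃): g₁(P₁X₁, P₂X₂P₁ᵀ, X₃P₂ᵀ) = P₁ g₁(X₁,X₂,X₃), g₂(P₁X₁, P₂X₂P₁ᵀ, X₃P₂ᵀ) = P₂ g₂(X₁,X₂,X₃) P₁ᵀ, and g₃(P₁X₁, P₂X₂P₁ᵀ, X₃P₂ᵀ) = g₃(X₁,X₂,X₃) P₂ᵀ. Write (W₁ᵗ, W₂ᵗ, W₃ᵗ) = gᵗ(W₁,W₂,W₃) for the t-fold iterate. Then for every t ≥ 0 and all permutation matrices P₁, P₂, the triple (P₁W₁ᵗ, P₂W₂ᵗP₁ᵀ, W₃ᵗP₂ᵀ) has the same joint distribution as (W₁ᵗ, W₂ᵗ,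 W₃ᵗ); in particular P₂W₂ᵗP₁ᵀ has the same distribution as W₂ᵗ (W₂ᵗ is row-and-column exchangeable), P₁W₁ᵗ has the same distribution as W₁ᵗ (W₁ᵗ is row exchangeable), and W₃ᵗP₂ᵀ has the same distribution as W₃ᵗ (W₃ᵗ is column exchangeable). -/
/-!
Relabelling the hidden neurons acts on weight triples by a measurable map `T` which only
permutes matrix entries. Since the initial matrices are independent with iid entries, their
joint law `μ` is a product of exchangeable laws, so `T` preserves `μ`. Equivariance of `g` says
that `T` commutes with `g`, hence with `gᵗ`, and so `T` also preserves the law `gᵗ₊μ` of the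
trained weights.
-/

open MeasureTheory ProbabilityTheory Matrix

/-- Matrices carry the product (entrywise) measurable structure. -/
instance matrixMeasurableSpace {m n α : Type*} [MeasurableSpace α] :
    MeasurableSpace (Matrix m n α) :=
  inferInstanceAs (MeasurableSpace (m → n → α))

/-- A permutation matrix: a square 0-1 matrix with exactly one 1 in each row and in
each column. -/
def IsPermMatrix {n : ℕ} (P : Matrix (Fin n) (Fin n) ℝ) : Prop :=
  (∀ i j, P i j = 0 ∨ P i j = 1) ∧ (∀ i, ∃! j, P i j = 1) ∧ (∀ j, ∃! i, P i j = 1)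

section IID

variable {Ω : Type*} [MeasurableSpace Ω] {P : Measure Ω}

theorem map_comp_equiv_eq_of_iid {ι α : Type*} [Fintype ι] [MeasurableSpace α]
    {X : Ω → ι → α} (hX : Measurable X) (hInd : iIndepFun (fun i ω => X ω i) P)
    (hId : ∀ i j, P.map (fun ω => X ω i) = P.map (fun ω => X ω j)) (e : ι ≃ ι) :
    P.map (fun ω => X ω ∘ e) = P.map X := by
  have hXi : ∀ i, Measurable fun ω => X ω i := fun i => (measurable_pi_apply i).comp hX
  have := hInd.isProbabilityMeasure
  have : ∀ i, IsProbabilityMeasure (P.map fun ω => X ω i) :=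
    fun i => Measure.isProbabilityMeasure_map (hXi i).aemeasurable
  have hpi : P.map X = Measure.pi fun i => P.map fun ω => X ω i :=
    hInd.map_fun_eq_pi_map fun i => (hXi i).aemeasurable
  have hreindex := measurePreserving_arrowCongr' (fun i => P.map fun ω => X ω i)
    (fun i => P.map fun ω => X ω i) e.symm (MeasurableEquiv.refl α)
    fun i => by rw [hId (e.symm i) i]; exact MeasurePreserving.id _
  rw [← hpi] at hreindex
  rw [← hreindex.map_eq, Measure.map_map hreindex.measurable hX]
  rfl

theorem measurePreserving_submatrix_of_iid {m n α : Type*} [Fintype m] [Fintype n]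
    [MeasurableSpace α] {W : Ω → Matrix m n α} (hW : Measurable W)
    (hInd : iIndepFun (fun p : m × n => fun ω => W ω p.1 p.2) P)
    (hId : ∀ p q : m × n,
      P.map (fun ω => W ω p.1 p.2) = P.map (fun ω => W ω q.1 q.2))
    (e : m ≃ m) (f : n ≃ n) :
    MeasurePreserving (fun M : Matrix m n α => M.submatrix e f) (P.map W) (P.map W) := by
  have hsub : Measurable fun M : Matrix m n α => M.submatrix e f :=
    measurable_pi_lambda _ fun i => measurable_pi_lambda _ fun j =>
      (measurable_pi_apply (f j)).comp (measurable_pi_apply (e i))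
  refine ⟨hsub, ?_⟩
  have hU : Measurable fun ω => Function.uncurry (W ω) :=
    (MeasurableEquiv.curry m n α).symm.measurable.comp hW
  have key := map_comp_equiv_eq_of_iid hU hInd hId (e.prodCongr f)
  have hU' : Measurable fun ω => Function.uncurry (W ω) ∘ e.prodCongr f :=
    measurable_pi_lambda _ fun p => (measurable_pi_apply _).comp hU
  have hcurry : Measurable (Function.curry : (m × n → α) → Matrix m n α) :=
    (MeasurableEquiv.curry m n α).measurable
  rw [Measure.map_map hsub hW]
  exact (Measure.map_map hcurry hU').symm.trans
    ((congrArg _ key).trans (Measure.map_map hcurry hU))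

end IID

theorem MeasureTheory.MeasurePreserving.map_of_commute {α : Type*} [MeasurableSpace α]
    {μ : Measure α} {T h : α → α} (hT : MeasurePreserving T μ μ) (hh : Measurable h)
    (hcomm : Function.Commute T h) : MeasurePreserving T (μ.map h) (μ.map h) :=
  ⟨hT.measurable, by rw [Measure.map_map hT.measurable hh, hcomm.comp_eq,
    ← Measure.map_map hh hT.measurable, hT.map_eq]⟩

theorem MeasureTheory.MeasurePreserving.identDistrib_iterate_of_commute {Ω α : Type*}
    [MeasurableSpace Ω] [MeasurableSpace α] {P : Measure Ω} {X : Ω → α} {T g : α → α}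
    (hX : Measurable X) (hg : Measurable g) (hT : MeasurePreserving T (P.map X) (P.map X))
    (hcomm : Function.Commute T g) (t : ℕ) :
    IdentDistrib (T ∘ g^[t] ∘ X) (g^[t] ∘ X) P P := by
  have hgt : Measurable g^[t] := hg.iterate t
  refine ⟨(hT.measurable.comp (hgt.comp hX)).aemeasurable, (hgt.comp hX).aemeasurable, ?_⟩
  rw [← Measure.map_map hT.measurable (hgt.comp hX), ← Measure.map_map hgt hX]
  exact (hT.map_of_commute hgt (hcomm.iterate_right t)).map_eq

theorem IsPermMatrix.exists_eq_permMatrix {n : ℕ} {Q : Matrix (Fin n) (Fin n) ℝ}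
    (hQ : IsPermMatrix Q) : ∃ σ : Equiv.Perm (Fin n), Q = σ.permMatrix ℝ := by
  obtain ⟨h01, hrow, hcol⟩ := hQ
  choose f hf hf_unique using hrow
  have hinj : Function.Injective f := fun i i' h =>
    (hcol (f i)).unique (hf i) (h ▸ hf i')
  refine ⟨Equiv.ofBijective f hinj.bijective_of_finite, ?_⟩
  ext i j
  simp only [PEquiv.toMatrix_apply, Equiv.toPEquiv_apply, Option.mem_def, Option.some.injEq,
    Equiv.ofBijective_apply]
  split_ifs with hj
  · exact hj ▸ hf i
  · exact (h01 i j).resolve_right fun h1 => hj (hf_unique i j h1).symm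

theorem Equiv.Perm.permMatrix_mul_eq_submatrix {l n R : Type*} [Fintype n] [DecidableEq n]
    [NonAssocSemiring R] (σ : Equiv.Perm n) (M : Matrix n l R) :
    σ.permMatrix R * M = M.submatrix σ id :=
  PEquiv.toMatrix_toPEquiv_mul σ M

theorem Matrix.mul_transpose_permMatrix_eq_submatrix {l n R : Type*} [Fintype n] [DecidableEq n]
    [NonAssocSemiring R] (M : Matrix l n R) (σ : Equiv.Perm n) :
    M * (σ.permMatrix R)ᵀ = M.submatrix id σ := by
  rw [transpose_permMatrix, PEquiv.mul_toMatrix_toPEquiv]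
  rfl

/-- Relabelling the neurons of both hidden layers; with `Pᵢ = σᵢ.permMatrix`, this is
`(X₁, X₂, X₃) ↦ (P₁X₁, P₂X₂P₁ᵀ, X₃P₂ᵀ)`. -/
def permuteHidden {k l m o α : Type*} (σ₁ : Equiv.Perm l) (σ₂ : Equiv.Perm m)
    (X : Matrix l k α × Matrix m l α × Matrix o m α) :
    Matrix l k α × Matrix m l α × Matrix o m α :=
  (X.1.submatrix σ₁ id, X.2.1.submatrix σ₂ σ₁, X.2.2.submatrix id σ₂)

/-- If the initial weight matrices are mutually independent with IID entries and the
update rule `g` commutes with permutations of the hidden neurons, then at every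
iteration `t` the triple `(P₁W₁ᵗ, P₂W₂ᵗP₁ᵀ, W₃ᵗP₂ᵀ)` has the same joint distribution as
`(W₁ᵗ, W₂ᵗ, W₃ᵗ)`; in particular `W₂ᵗ` is row-and-column exchangeable, `W₁ᵗ` is row
exchangeable and `W₃ᵗ` is column exchangeable. -/
theorem trained_weights_exchangeable {Ω : Type*} [MeasurableSpace Ω] (P : Measure Ω)
    [IsProbabilityMeasure P] {n₀ n₁ n₂ n₃ : ℕ}
    (W₁ : Ω → Matrix (Fin n₁) (Fin n₀) ℝ) (W₂ : Ω → Matrix (Fin n₂) (Fin n₁) ℝ)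
    (W₃ : Ω → Matrix (Fin n₃) (Fin n₂) ℝ)
    (hW₁ : Measurable W₁) (hW₂ : Measurable W₂) (hW₃ : Measurable W₃)
    -- the entries within each initial matrix are mutually independent
    (hInd₁ : iIndepFun
      (fun p : Fin n₁ × Fin n₀ => fun ω => W₁ ω p.1 p.2) P)
    (hInd₂ : iIndepFun
      (fun p : Fin n₂ × Fin n₁ => fun ω => W₂ ω p.1 p.2) P)
    (hInd₃ : iIndepFun
      (fun p : Fin n₃ × Fin n₂ => fun ω => W₃ ω p.1 p.2) P)
    -- the entries within each initial matrix are identically distributed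
    (hId₁ : ∀ p q : Fin n₁ × Fin n₀,
      Measure.map (fun ω => W₁ ω p.1 p.2) P = Measure.map (fun ω => W₁ ω q.1 q.2) P)
    (hId₂ : ∀ p q : Fin n₂ × Fin n₁,
      Measure.map (fun ω => W₂ ω p.1 p.2) P = Measure.map (fun ω => W₂ ω q.1 q.2) P)
    (hId₃ : ∀ p q : Fin n₃ × Fin n₂,
      Measure.map (fun ω => W₃ ω p.1 p.2) P = Measure.map (fun ω => W₃ ω q.1 q.2) P)
    -- the three initial matrices are mutually independent
    (hIndep : Measure.map (fun ω => (W₁ ω, W₂ ω, W₃ ω)) P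
      = (Measure.map W₁ P).prod ((Measure.map W₂ P).prod (Measure.map W₃ P)))
    -- the measurable update rule and its permutation equivariance
    (g : Matrix (Fin n₁) (Fin n₀) ℝ × Matrix (Fin n₂) (Fin n₁) ℝ × Matrix (Fin n₃) (Fin n₂) ℝ →
      Matrix (Fin n₁) (Fin n₀) ℝ × Matrix (Fin n₂) (Fin n₁) ℝ × Matrix (Fin n₃) (Fin n₂) ℝ)
    (hg : Measurable g)
    (hequiv : ∀ P₁ : Matrix (Fin n₁) (Fin n₁) ℝ, ∀ P₂ : Matrix (Fin n₂) (Fin n₂) ℝ,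
      IsPermMatrix P₁ → IsPermMatrix P₂ →
      ∀ X : Matrix (Fin n₁) (Fin n₀) ℝ × Matrix (Fin n₂) (Fin n₁) ℝ ×
            Matrix (Fin n₃) (Fin n₂) ℝ,
        (g (P₁ * X.1, P₂ * X.2.1 * P₁ᵀ, X.2.2 * P₂ᵀ)).1 = P₁ * (g X).1 ∧
        (g (P₁ * X.1, P₂ * X.2.1 * P₁ᵀ, X.2.2 * P₂ᵀ)).2.1 = P₂ * (g X).2.1 * P₁ᵀ ∧
        (g (P₁ * X.1, P₂ * X.2.1 * P₁ᵀ, X.2.2 * P₂ᵀ)).2.2 = (g X).2.2 * P₂ᵀ) :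
    ∀ t : ℕ, ∀ P₁ : Matrix (Fin n₁) (Fin n₁) ℝ, ∀ P₂ : Matrix (Fin n₂) (Fin n₂) ℝ,
      IsPermMatrix P₁ → IsPermMatrix P₂ →
      (Measure.map (fun ω =>
          (P₁ * (g^[t] (W₁ ω, W₂ ω, W₃ ω)).1,
           P₂ * (g^[t] (W₁ ω, W₂ ω, W₃ ω)).2.1 * P₁ᵀ,
           (g^[t] (W₁ ω, W₂ ω, W₃ ω)).2.2 * P₂ᵀ)) P
        = Measure.map (fun ω => g^[t] (W₁ ω, W₂ ω, W₃ ω)) P) ∧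
      (Measure.map (fun ω => P₂ * (g^[t] (W₁ ω, W₂ ω, W₃ ω)).2.1 * P₁ᵀ) P
        = Measure.map (fun ω => (g^[t] (W₁ ω, W₂ ω, W₃ ω)).2.1) P) ∧
      (Measure.map (fun ω => P₁ * (g^[t] (W₁ ω, W₂ ω, W₃ ω)).1) P
        = Measure.map (fun ω => (g^[t] (W₁ ω, W₂ ω, W₃ ω)).1) P) ∧
      (Measure.map (fun ω => (g^[t] (W₁ ω, W₂ ω, W₃ ω)).2.2 * P₂ᵀ) P
        = Measure.map (fun ω => (g^[t] (W₁ ω, W₂ ω, W₃ ω)).2.2) P) := by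
  intro t P₁ P₂ h₁ h₂
  obtain ⟨σ₁, rfl⟩ := h₁.exists_eq_permMatrix
  obtain ⟨σ₂, rfl⟩ := h₂.exists_eq_permMatrix
  have hW : Measurable fun ω => (W₁ ω, W₂ ω, W₃ ω) := hW₁.prodMk (hW₂.prodMk hW₃)
  have hcomm : Function.Commute (permuteHidden σ₁ σ₂) g := fun X => by
    obtain ⟨e₁, e₂, e₃⟩ := hequiv _ _ h₁ h₂ X
    simp only [Equiv.Perm.permMatrix_mul_eq_submatrix,
      Matrix.mul_transpose_permMatrix_eq_submatrix] at e₁ e₂ e₃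
    exact (Prod.ext e₁ (Prod.ext e₂ e₃)).symm
  have hlaw : MeasurePreserving (permuteHidden σ₁ σ₂)
      (P.map fun ω => (W₁ ω, W₂ ω, W₃ ω))
      (P.map fun ω => (W₁ ω, W₂ ω, W₃ ω)) := by
    rw [hIndep]
    exact (measurePreserving_submatrix_of_iid hW₁ hInd₁ hId₁ σ₁ (.refl _)).prod
      ((measurePreserving_submatrix_of_iid hW₂ hInd₂ hId₂ σ₂ σ₁).prod
        (measurePreserving_submatrix_of_iid hW₃ hInd₃ hId₃ (.refl _) σ₂))
  have hjoint := hlaw.identDistrib_iterate_of_commute hW hg hcomm t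
  simp only [Equiv.Perm.permMatrix_mul_eq_submatrix,
    Matrix.mul_transpose_permMatrix_eq_submatrix]
  exact ⟨hjoint.map_eq, (hjoint.comp (measurable_fst.comp measurable_snd)).map_eq,
    (hjoint.comp measurable_fst).map_eq,
    (hjoint.comp (measurable_snd.comp measurable_snd)).map_eq⟩
end

section
/- Let θ ∈ [0, π] and let (Z_x, Z_y) be a centered bivariate Gaussian vector with E[Z_x²] = E[Z_y²] = 1 and E[Z_x Z_y] = cos θ. Then E[σ(Z_x) σ(Z_y)] = (1/(2π)) (sin θ + (π − θ) cos θ). -/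
open MeasureTheory ProbabilityTheory Real Set

/-- The ReLU activation. -/
noncomputable def relu (z : ℝ) : ℝ := max 0 z

/-- The centered bivariate Gaussian measure on `ℝ²` with unit variances and covariance
`cos θ`, realized as the law of `(Z₁, cos θ · Z₁ + sin θ · Z₂)` for independent standard
Gaussians `Z₁, Z₂` (for `θ ∈ [0, π]`). -/
noncomputable def stdBivariateGaussian (θ : ℝ) : Measure (ℝ × ℝ) :=
  Measure.map (fun p : ℝ × ℝ => (p.1, Real.cos θ * p.1 + Real.sin θ * p.2))
    ((gaussianReal 0 1).prod (gaussianReal 0 1))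

/-!
Write `(Z_x, Z_y) = (X, cos θ · X + sin θ · Y)` with `X, Y` independent standard Gaussians.
The integrand `relu x * relu (cos θ · x + sin θ · y)` is positively homogeneous of degree 2, so in
polar coordinates the radial integral `∫₀^∞ r³ e^{-r²/2} dr = 2` factors out and the expectation is
`π⁻¹ ∫_{-π}^{π} relu (cos φ) relu (cos (φ - θ)) dφ`. For `θ ∈ [0, π]` both factors are positive
exactly on `[θ - π/2, π/2]`, where the integral of `cos φ cos (φ - θ)` is
`(sin θ + (π - θ) cos θ) / 2`.
-/

@[fun_prop]
lemma continuous_relu : Continuous relu := continuous_const.max continuous_id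

lemma relu_mul_of_nonneg {r : ℝ} (hr : 0 ≤ r) (a : ℝ) : relu (r * a) = r * relu a := by
  rw [relu, relu, mul_max_of_nonneg _ _ hr, mul_zero]

lemma relu_mul_relu_linear_smul (a b : ℝ) {r : ℝ} (hr : 0 ≤ r) (q : ℝ × ℝ) :
    relu (r • q).1 * relu (a * (r • q).1 + b * (r • q).2)
      = r ^ 2 * (relu q.1 * relu (a * q.1 + b * q.2)) := by
  rw [Prod.smul_fst, Prod.smul_snd, smul_eq_mul, smul_eq_mul,
    show a * (r * q.1) + b * (r * q.2) = r * (a * q.1 + b * q.2) by ring,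
    relu_mul_of_nonneg hr, relu_mul_of_nonneg hr]
  ring

lemma integral_Ioi_pow_three_mul_exp_neg_sq_div_two :
    ∫ r in Ioi (0 : ℝ), r ^ 3 * exp (-r ^ 2 / 2) = 2 := by
  have h := integral_rpow_mul_exp_neg_mul_rpow (p := 2) (q := 3) (b := 1 / 2)
    two_pos (by norm_num) (by norm_num)
  have h_four : (1 / 2 : ℝ) ^ (-(3 + 1) / 2 : ℝ) = 4 := by
    rw [show (-(3 + 1) / 2 : ℝ) = ((-2 : ℤ) : ℝ) by norm_num, rpow_intCast]
    norm_num
  rw [h_four, show ((3 : ℝ) + 1) / 2 = 1 + 1 by norm_num, Gamma_add_one one_ne_zero,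
    Gamma_one] at h
  convert h using 1
  · refine setIntegral_congr_fun measurableSet_Ioi fun r _ => ?_
    norm_cast
    ring_nf
  · norm_num

lemma gaussianPDFReal_mul_gaussianPDFReal (x y : ℝ) :
    gaussianPDFReal 0 1 x * gaussianPDFReal 0 1 y = (2 * π)⁻¹ * exp (-(x ^ 2 + y ^ 2) / 2) := by
  simp only [gaussianPDFReal, NNReal.coe_one, mul_one, sub_zero]
  rw [mul_mul_mul_comm, ← mul_inv, mul_self_sqrt (by positivity), ← exp_add]
  ring_nf

lemma gaussianReal_prod_gaussianReal_eq_withDensity :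
    (gaussianReal 0 1).prod (gaussianReal 0 1) = (volume : Measure (ℝ × ℝ)).withDensity
      fun p => ENNReal.ofReal ((2 * π)⁻¹ * exp (-(p.1 ^ 2 + p.2 ^ 2) / 2)) := by
  rw [gaussianReal_of_var_ne_zero 0 one_ne_zero, prod_withDensity (measurable_gaussianPDF 0 1)
    (measurable_gaussianPDF 0 1), ← Measure.volume_eq_prod]
  simp only [gaussianPDF, ← ENNReal.ofReal_mul (gaussianPDFReal_nonneg 0 1 _),
    gaussianPDFReal_mul_gaussianPDFReal]

lemma integral_gaussianReal_prod_gaussianReal (f : ℝ × ℝ → ℝ) :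
    ∫ p, f p ∂(gaussianReal 0 1).prod (gaussianReal 0 1)
      = ∫ p, (2 * π)⁻¹ * exp (-(p.1 ^ 2 + p.2 ^ 2) / 2) * f p := by
  rw [gaussianReal_prod_gaussianReal_eq_withDensity, integral_withDensity_eq_integral_toReal_smul
    (by fun_prop) (.of_forall fun _ => ENNReal.ofReal_lt_top)]
  congr 1 with p
  rw [ENNReal.toReal_ofReal (by positivity), smul_eq_mul]

lemma integral_gaussianReal_prod_gaussianReal_of_homogeneous {f : ℝ × ℝ → ℝ}
    (hf : ∀ r : ℝ, 0 < r → ∀ p, f (r • p) = r ^ 2 * f p) :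
    ∫ p, f p ∂(gaussianReal 0 1).prod (gaussianReal 0 1)
      = π⁻¹ * ∫ φ in Ioo (-π) π, f (cos φ, sin φ) := by
  rw [integral_gaussianReal_prod_gaussianReal, ← integral_comp_polarCoord_symm, polarCoord_target,
    Measure.volume_eq_prod]
  have h_polar : EqOn
      (fun p : ℝ × ℝ => p.1 • ((2 * π)⁻¹ * exp (-((polarCoord.symm p).1 ^ 2
        + (polarCoord.symm p).2 ^ 2) / 2) * f (polarCoord.symm p)))
      (fun p => p.1 ^ 3 * exp (-p.1 ^ 2 / 2) * ((2 * π)⁻¹ * f (cos p.2, sin p.2)))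
      (Ioi 0 ×ˢ Ioo (-π) π) := by
    rintro ⟨r, φ⟩ ⟨hr, -⟩
    have h_symm : polarCoord.symm (r, φ) = r • (cos φ, sin φ) := by
      simp [polarCoord_symm_apply]
    have h_sq : (r * cos φ) ^ 2 + (r * sin φ) ^ 2 = r ^ 2 := by
      linear_combination r ^ 2 * sin_sq_add_cos_sq φ
    simp only [h_symm, hf r hr, Prod.smul_fst, Prod.smul_snd, smul_eq_mul, h_sq]
    ring
  rw [setIntegral_congr_fun (measurableSet_Ioi.prod measurableSet_Ioo) h_polar,
    setIntegral_prod_mul (fun r => r ^ 3 * exp (-r ^ 2 / 2))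
      (fun φ => (2 * π)⁻¹ * f (cos φ, sin φ)),
    integral_Ioi_pow_three_mul_exp_neg_sq_div_two, integral_const_mul]
  field_simp

lemma integral_cos_mul_cos_sub (θ a b : ℝ) :
    ∫ φ in a..b, cos φ * cos (φ - θ)
      = ((b - a) * cos θ + (sin (2 * b - θ) - sin (2 * a - θ)) / 2) / 2 := by
  have h_prod_to_sum : ∀ φ, cos φ * cos (φ - θ) = (cos θ + cos (2 * φ - θ)) / 2 := fun φ => by
    rw [show 2 * φ - θ = φ + (φ - θ) by ring, cos_add, cos_sub φ θ, sin_sub]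
    linear_combination cos θ / 2 * sin_sq_add_cos_sq φ
  simp only [h_prod_to_sum]
  rw [intervalIntegral.integral_div, intervalIntegral.integral_add intervalIntegrable_const
    ((by fun_prop : Continuous fun φ => cos (2 * φ - θ)).intervalIntegrable _ _),
    intervalIntegral.integral_const, intervalIntegral.integral_comp_mul_sub (fun x => cos x)
    two_ne_zero, integral_cos, smul_eq_mul, smul_eq_mul]
  ring

lemma relu_cos_mul_relu_cos_sub {θ φ : ℝ} (hθ : θ ∈ Icc 0 π) (hφ : φ ∈ Ioo (-π) π) :
    relu (cos φ) * relu (cos (φ - θ))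
      = (Icc (θ - π / 2) (π / 2)).indicator (fun φ => cos φ * cos (φ - θ)) φ := by
  obtain ⟨hθ0, hθπ⟩ := hθ
  by_cases hmem : φ ∈ Icc (θ - π / 2) (π / 2)
  · rw [indicator_of_mem hmem, relu, relu, max_eq_right, max_eq_right]
    · exact cos_nonneg_of_mem_Icc ⟨by linarith [hmem.1], by linarith [hmem.2]⟩
    · exact cos_nonneg_of_mem_Icc ⟨by linarith [hmem.1], by linarith [hmem.2]⟩
  rw [indicator_of_notMem hmem]
  rcases lt_or_ge (π / 2) φ with h_right | h_right
  · have hc : cos φ ≤ 0 := cos_nonpos_of_pi_div_two_le_of_le h_right.le (by linarith [hφ.2])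
    simp only [relu, max_eq_left hc, zero_mul]
  rcases lt_or_ge φ (-(π / 2)) with h_left | h_left
  · have hc : cos φ ≤ 0 := by
      rw [← cos_neg]
      exact cos_nonpos_of_pi_div_two_le_of_le (by linarith) (by linarith [hφ.1])
    simp only [relu, max_eq_left hc, zero_mul]
  have h_lt : φ < θ - π / 2 := by
    by_contra! h
    exact hmem ⟨h, h_right⟩
  have hc : cos (φ - θ) ≤ 0 := by
    rw [← cos_neg]
    exact cos_nonpos_of_pi_div_two_le_of_le (by linarith) (by linarith)
  simp only [relu, max_eq_left hc, mul_zero]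

lemma integral_relu_cos_mul_relu_cos_sub {θ : ℝ} (hθ : θ ∈ Icc 0 π) :
    ∫ φ in Ioo (-π) π, relu (cos φ) * relu (cos (φ - θ)) = (sin θ + (π - θ) * cos θ) / 2 := by
  have h_sub : Icc (θ - π / 2) (π / 2) ⊆ Ioo (-π) π :=
    Icc_subset_Ioo (by linarith [hθ.1, pi_pos]) (by linarith [pi_pos])
  rw [setIntegral_congr_fun measurableSet_Ioo fun φ hφ => relu_cos_mul_relu_cos_sub hθ hφ,
    setIntegral_indicator measurableSet_Icc, inter_eq_right.mpr h_sub,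
    integral_Icc_eq_integral_Ioc, ← intervalIntegral.integral_of_le (by linarith [hθ.2]),
    integral_cos_mul_cos_sub, show 2 * (π / 2) - θ = π - θ by ring,
    show 2 * (θ - π / 2) - θ = -(π - θ) by ring, sin_neg, sin_pi_sub]
  ring

theorem relu_gaussian_expectation_general (θ : ℝ) (hθ : θ ∈ Set.Icc 0 Real.pi)
    {Ω : Type*} [MeasurableSpace Ω] (P : Measure Ω)
    (Z : Ω → ℝ × ℝ) (hZ : Measure.map Z P = stdBivariateGaussian θ) :
    ∫ ω, relu (Z ω).1 * relu (Z ω).2 ∂P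
      = (1 / (2 * Real.pi)) * (Real.sin θ + (Real.pi - θ) * Real.cos θ) := by
  have : IsProbabilityMeasure (stdBivariateGaussian θ) :=
    Measure.isProbabilityMeasure_map (by fun_prop)
  have hZ_meas : AEMeasurable Z P := .of_map_ne_zero (hZ ▸ IsProbabilityMeasure.ne_zero _)
  calc ∫ ω, relu (Z ω).1 * relu (Z ω).2 ∂P
      = ∫ q, relu q.1 * relu (cos θ * q.1 + sin θ * q.2)
          ∂(gaussianReal 0 1).prod (gaussianReal 0 1) := by
        rw [← integral_map (f := fun q : ℝ × ℝ => relu q.1 * relu q.2) hZ_meas (by fun_prop), hZ,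
          stdBivariateGaussian, integral_map (by fun_prop) (by fun_prop)]
    _ = π⁻¹ * ∫ φ in Ioo (-π) π, relu (cos φ) * relu (cos (φ - θ)) := by
        have h_cos_sub : ∀ φ, cos θ * cos φ + sin θ * sin φ = cos (φ - θ) := fun φ => by
          rw [cos_sub]
          ring
        rw [integral_gaussianReal_prod_gaussianReal_of_homogeneous
          (f := fun q => relu q.1 * relu (cos θ * q.1 + sin θ * q.2))
          fun r hr q => relu_mul_relu_linear_smul (cos θ) (sin θ) hr.le q]
        simp only [h_cos_sub]
    _ = (1 / (2 * π)) * (sin θ + (π - θ) * cos θ) := by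
        rw [integral_relu_cos_mul_relu_cos_sub hθ]
        ring

/-- **Arc-cosine kernel of degree 1**: for a centered bivariate Gaussian `(Z_x, Z_y)`
with `E[Z_x²] = E[Z_y²] = 1` and `E[Z_x Z_y] = cos θ`,
`E[σ(Z_x) σ(Z_y)] = (1/2π)(sin θ + (π − θ) cos θ)`. -/
theorem relu_gaussian_expectation (θ : ℝ) (hθ : θ ∈ Set.Icc 0 Real.pi)
    {Ω : Type*} [MeasurableSpace Ω] (P : Measure Ω) [IsProbabilityMeasure P]
    (Z : Ω → ℝ × ℝ) (hZ : Measure.map Z P = stdBivariateGaussian θ) :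
    ∫ ω, relu (Z ω).1 * relu (Z ω).2 ∂P
      = (1 / (2 * Real.pi)) * (Real.sin θ + (Real.pi - θ) * Real.cos θ) :=
  relu_gaussian_expectation_general θ hθ P Z hZ
end

section
/- Let (W_i)_{i≥1} be a sequence of square-integrable real random variables that is conditionally iid given a sub-σ-algebra G, and set M = E[W₁ | G]. Then for every m ≥ 1, every unit vector x̂ ∈ ℝ^m, and every real number c, E[σ(c·M) · σ(Σ_{i=1}^m (W_i − M) x̂_i)] ≤ |c| · √(E[M²]) · √(E[W₁²] − E[M²]), and moreover E[M²] = E[W₁ W₂], so the bound equals |c| · √(E[W₁W₂]) · √(E[W₁²] − E[W₁W₂]). -/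
/-!
Conditionally on `G` every `Wᵢ` has mean `M`, so pulling out `M` gives `E[Wᵢ M] = E[M²]`, and
conditional independence gives `E[Wᵢ Wⱼ] = E[M²]` for `i ≠ j`. Hence the centred variables
`Wᵢ − M` are orthogonal in `L²`, each with second moment `E[W₁²] − E[M²]`, and for a unit vector
`x̂` the sum `S = Σᵢ (Wᵢ − M) x̂ᵢ` has `E[S²] = E[W₁²] − E[M²]`. The bound is Cauchy–Schwarz
applied to `σ(cM) σ(S) ≤ |c| |M| |S|`.
-/

open MeasureTheory ProbabilityTheory

/-- A sequence of real random variables is conditionally IID given the sub-σ-algebra `G`: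
conditionally on `G` the variables are independent, and they all have the same
conditional distribution given `G`. -/
def CondIID {Ω : Type*} (G : MeasurableSpace Ω) {mΩ : MeasurableSpace Ω}
    [StandardBorelSpace Ω] (hG : G ≤ mΩ) (P : Measure Ω) [IsFiniteMeasure P]
    (W : ℕ → Ω → ℝ) : Prop :=
  iCondIndepFun G hG W P ∧
  ∀ i, ∀ s : Set ℝ, MeasurableSet s →
    (P[(W i ⁻¹' s).indicator (fun _ => (1 : ℝ))|G]) =ᵐ[P]
      (P[(W 0 ⁻¹' s).indicator (fun _ => (1 : ℝ))|G])

lemma ProbabilityTheory.Kernel.IndepFun.ae_indepFun {α Ω : Type*} {mα : MeasurableSpace α}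
    {mΩ : MeasurableSpace Ω} {κ : Kernel α Ω} [IsMarkovKernel κ] {μ : Measure α}
    {f g : Ω → ℝ} (hf : Measurable f) (hg : Measurable g) (h : Kernel.IndepFun f g κ μ) :
    ∀ᵐ a ∂μ, ProbabilityTheory.IndepFun f g (κ a) := by
  -- Only countably many product identities are needed: rational half-lines generate the Borel
  -- σ-algebra, so the exceptional null sets can be collected into one.
  have h_rat : ∀ᵐ a ∂μ, ∀ q r : ℚ,
      κ a (f ⁻¹' Set.Iic (q : ℝ) ∩ g ⁻¹' Set.Iic (r : ℝ))
        = κ a (f ⁻¹' Set.Iic (q : ℝ)) * κ a (g ⁻¹' Set.Iic (r : ℝ)) := by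
    simp only [ae_all_iff]
    exact fun q r => Kernel.indepFun_iff_measure_inter_preimage_eq_mul.mp h _ _
      measurableSet_Iic measurableSet_Iic
  have h_gen : ∀ φ : Ω → ℝ, MeasurableSpace.comap φ inferInstance
      = MeasurableSpace.generateFrom (Set.preimage φ '' ⋃ q : ℚ, {Set.Iic (q : ℝ)}) := by
    intro φ
    rw [BorelSpace.measurable_eq (α := ℝ), Real.borel_eq_generateFrom_Iic_rat,
      MeasurableSpace.comap_generateFrom]
  filter_upwards [h_rat] with a ha
  rw [IndepFun_iff_Indep]
  refine ProbabilityTheory.IndepSets.indep hf.comap_le hg.comap_le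
    (Real.isPiSystem_Iic_rat.comap f) (Real.isPiSystem_Iic_rat.comap g) (h_gen f) (h_gen g) ?_
  rintro _ _ ⟨_, hq, rfl⟩ ⟨_, hr, rfl⟩
  simp only [Set.mem_iUnion, Set.mem_singleton_iff] at hq hr
  obtain ⟨q, rfl⟩ := hq
  obtain ⟨r, rfl⟩ := hr
  exact Filter.Eventually.of_forall fun _ => ha q r

section CondExp

variable {Ω : Type*} {G mΩ : MeasurableSpace Ω} {P : Measure Ω} [IsFiniteMeasure P]

lemma ProbabilityTheory.CondIndepFun.condExp_mul_ae_eq [StandardBorelSpace Ω] {hG : G ≤ mΩ}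
    {f g : Ω → ℝ} (h : CondIndepFun G hG f g P) (hf : Measurable f) (hg : Measurable g)
    (hfi : Integrable f P) (hgi : Integrable g P) (hfgi : Integrable (f * g) P) :
    P[f * g|G] =ᵐ[P] P[f|G] * P[g|G] := by
  have h_ker : ∀ᵐ ω ∂P, IndepFun f g (condExpKernel P G ω) :=
    ae_of_ae_trim hG (Kernel.IndepFun.ae_indepFun hf hg h)
  filter_upwards [h_ker, condExp_ae_eq_integral_condExpKernel hG hfgi,
    condExp_ae_eq_integral_condExpKernel hG hfi, condExp_ae_eq_integral_condExpKernel hG hgi]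
    with ω h_ind hfg_eq hf_eq hg_eq
  rw [hfg_eq, Pi.mul_apply, hf_eq, hg_eq]
  exact h_ind.integral_fun_mul_eq_mul_integral hf.aestronglyMeasurable hg.aestronglyMeasurable

lemma map_restrict_eq_of_condExp_indicator_ae_eq {β : Type*} [MeasurableSpace β]
    (hG : G ≤ mΩ) {X Y : Ω → β} (hX : Measurable X) (hY : Measurable Y)
    (h : ∀ s, MeasurableSet s → P[(X ⁻¹' s).indicator (fun _ => (1 : ℝ))|G]
      =ᵐ[P] P[(Y ⁻¹' s).indicator (fun _ => (1 : ℝ))|G])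
    {A : Set Ω} (hA : MeasurableSet[G] A) :
    (P.restrict A).map X = (P.restrict A).map Y := by
  have h_real : ∀ {Z : Ω → β}, Measurable Z → ∀ {s}, MeasurableSet s →
      (P.restrict A).real (Z ⁻¹' s)
        = ∫ ω in A, P[(Z ⁻¹' s).indicator (fun _ => (1 : ℝ))|G] ω ∂P := by
    intro Z hZ s hs
    rw [setIntegral_condExp hG ((integrable_const 1).indicator (hZ hs)) hA,
      integral_indicator_const _ (hZ hs), smul_eq_mul, mul_one]
  ext s hs
  rw [Measure.map_apply hX hs, Measure.map_apply hY hs, ← ENNReal.toReal_eq_toReal_iff'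
    (measure_ne_top _ _) (measure_ne_top _ _), ← measureReal_def, ← measureReal_def,
    h_real hX hs, h_real hY hs]
  exact setIntegral_congr_ae (hG A hA) ((h s hs).mono fun _ hω _ => hω)

lemma condExp_ae_eq_of_map_restrict_eq (hG : G ≤ mΩ) {X Y : Ω → ℝ}
    (hX : Measurable X) (hY : Measurable Y) (hXi : Integrable X P) (hYi : Integrable Y P)
    (h : ∀ A, MeasurableSet[G] A → (P.restrict A).map X = (P.restrict A).map Y) :
    P[X|G] =ᵐ[P] P[Y|G] := by
  refine ae_eq_condExp_of_forall_setIntegral_eq hG hYi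
    (fun _ _ _ => integrable_condExp.integrableOn) (fun A hA _ => ?_)
    stronglyMeasurable_condExp.aestronglyMeasurable
  rw [setIntegral_condExp hG hXi hA]
  calc ∫ ω in A, X ω ∂P = ∫ y, y ∂(P.restrict A).map X :=
        (integral_map hX.aemeasurable aestronglyMeasurable_id).symm
    _ = ∫ ω in A, Y ω ∂P := by
        rw [h A hA]
        exact integral_map hY.aemeasurable aestronglyMeasurable_id

end CondExp

namespace CondIID

variable {Ω : Type*} {G mΩ : MeasurableSpace Ω} [StandardBorelSpace Ω] {hG : G ≤ mΩ}
  {P : Measure Ω} [IsFiniteMeasure P] {W : ℕ → Ω → ℝ}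

lemma map_restrict_eq (hiid : CondIID G hG P W) (hW : ∀ i, Measurable (W i)) (i : ℕ)
    {A : Set Ω} (hA : MeasurableSet[G] A) : (P.restrict A).map (W i) = (P.restrict A).map (W 0) :=
  map_restrict_eq_of_condExp_indicator_ae_eq hG (hW i) (hW 0) (hiid.2 i) hA

lemma identDistrib (hiid : CondIID G hG P W) (hW : ∀ i, Measurable (W i)) (i : ℕ) :
    IdentDistrib (W i) (W 0) P P where
  aemeasurable_fst := (hW i).aemeasurable
  aemeasurable_snd := (hW 0).aemeasurable
  map_eq := by simpa using hiid.map_restrict_eq hW i MeasurableSet.univ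

lemma condExp_ae_eq (hiid : CondIID G hG P W) (hW : ∀ i, Measurable (W i))
    (hWi : ∀ i, Integrable (W i) P) (i : ℕ) : P[W i|G] =ᵐ[P] P[W 0|G] :=
  condExp_ae_eq_of_map_restrict_eq hG (hW i) (hW 0) (hWi i) (hWi 0)
    fun _ hA => hiid.map_restrict_eq hW i hA

lemma integral_mul_eq (hiid : CondIID G hG P W) (hW : ∀ i, Measurable (W i))
    (hL2 : ∀ i, MemLp (W i) 2 P) {i j : ℕ} (hij : i ≠ j) :
    ∫ ω, W i ω * W j ω ∂P = ∫ ω, (P[W 0|G]) ω ^ 2 ∂P := by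
  have hWi : ∀ i, Integrable (W i) P := fun i => (hL2 i).integrable one_le_two
  have h_prod : P[W i * W j|G] =ᵐ[P] P[W i|G] * P[W j|G] :=
    (hiid.1.condIndepFun hij).condExp_mul_ae_eq (hW i) (hW j) (hWi i) (hWi j)
      ((hL2 i).integrable_mul (hL2 j))
  calc ∫ ω, W i ω * W j ω ∂P = ∫ ω, (P[W i * W j|G]) ω ∂P := (integral_condExp hG).symm
    _ = ∫ ω, (P[W 0|G]) ω ^ 2 ∂P := by
      refine integral_congr_ae ?_
      filter_upwards [h_prod, hiid.condExp_ae_eq hW hWi i, hiid.condExp_ae_eq hW hWi j]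
        with ω h_ω h_i h_j
      rw [h_ω, Pi.mul_apply, h_i, h_j, sq]

end CondIID

section SecondMoments

variable {Ω : Type*} {mΩ : MeasurableSpace Ω} {P : Measure Ω}

lemma integral_mul_eq_integral_sq_of_condExp_ae_eq [IsFiniteMeasure P] {G : MeasurableSpace Ω}
    (hG : G ≤ mΩ) {f M : Ω → ℝ} (hf : MemLp f 2 P) (hM : MemLp M 2 P)
    (hM_meas : StronglyMeasurable[G] M) (hfM : P[f|G] =ᵐ[P] M) :
    ∫ ω, f ω * M ω ∂P = ∫ ω, M ω ^ 2 ∂P := by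
  have h_pull : P[M * f|G] =ᵐ[P] M * P[f|G] :=
    condExp_mul_of_stronglyMeasurable_left hM_meas (hM.integrable_mul hf)
      (hf.integrable one_le_two)
  calc ∫ ω, f ω * M ω ∂P = ∫ ω, (P[M * f|G]) ω ∂P := by
        rw [integral_condExp hG]
        simp only [Pi.mul_apply, mul_comm]
    _ = ∫ ω, M ω ^ 2 ∂P := by
        refine integral_congr_ae ?_
        filter_upwards [h_pull, hfM] with ω h_ω h_f
        rw [h_ω, Pi.mul_apply, h_f, sq]

lemma integral_sub_mul_sub_of_condExp_ae_eq [IsFiniteMeasure P] {G : MeasurableSpace Ω}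
    (hG : G ≤ mΩ) {f g M : Ω → ℝ} (hf : MemLp f 2 P) (hg : MemLp g 2 P) (hM : MemLp M 2 P)
    (hM_meas : StronglyMeasurable[G] M) (hfM : P[f|G] =ᵐ[P] M) (hgM : P[g|G] =ᵐ[P] M) :
    ∫ ω, (f ω - M ω) * (g ω - M ω) ∂P = ∫ ω, f ω * g ω ∂P - ∫ ω, M ω ^ 2 ∂P := by
  have h_expand : ∀ ω, (f ω - M ω) * (g ω - M ω)
      = f ω * g ω - f ω * M ω - g ω * M ω + M ω ^ 2 := fun ω => by ring
  have hfg : Integrable (fun ω => f ω * g ω) P := hf.integrable_mul hg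
  have hfM' : Integrable (fun ω => f ω * M ω) P := hf.integrable_mul hM
  have hgM' : Integrable (fun ω => g ω * M ω) P := hg.integrable_mul hM
  simp_rw [h_expand]
  rw [integral_add (by fun_prop) hM.integrable_sq, integral_sub (by fun_prop) hgM',
    integral_sub hfg hfM',
    integral_mul_eq_integral_sq_of_condExp_ae_eq hG hf hM hM_meas hfM,
    integral_mul_eq_integral_sq_of_condExp_ae_eq hG hg hM hM_meas hgM]
  ring

lemma integral_sum_mul_sq_of_orthogonal {ι : Type*} [Fintype ι] [DecidableEq ι]
    {Y : ι → Ω → ℝ} (hY : ∀ i, MemLp (Y i) 2 P) {v : ℝ}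
    (h_orth : ∀ i j, ∫ ω, Y i ω * Y j ω ∂P = if i = j then v else 0) (x : ι → ℝ) :
    ∫ ω, (∑ i, Y i ω * x i) ^ 2 ∂P = v * ∑ i, x i ^ 2 := by
  have h_expand : ∀ ω, (∑ i, Y i ω * x i) ^ 2
      = ∑ i, ∑ j, (Y i ω * Y j ω) * (x i * x j) := fun ω => by
    rw [sq, Finset.sum_mul_sum]
    exact Finset.sum_congr rfl fun i _ => Finset.sum_congr rfl fun j _ => by ring
  have hYY : ∀ i j, Integrable (fun ω => Y i ω * Y j ω * (x i * x j)) P :=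
    fun i j => ((hY i).integrable_mul (hY j)).mul_const _
  simp_rw [h_expand]
  rw [integral_finsetSum _ fun i _ => integrable_finsetSum _ fun j _ => hYY i j]
  simp_rw [integral_finsetSum _ fun j _ => hYY _ j, integral_mul_const, h_orth, ite_mul,
    zero_mul, Finset.sum_ite_eq, Finset.mem_univ, if_true, Finset.mul_sum]
  exact Finset.sum_congr rfl fun i _ => by ring

end SecondMoments

section CauchySchwarz

variable {Ω : Type*} {mΩ : MeasurableSpace Ω} {P : Measure Ω}

lemma integral_abs_mul_abs_le_sqrt_mul_sqrt {f g : Ω → ℝ} (hf : MemLp f 2 P)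
    (hg : MemLp g 2 P) :
    ∫ ω, |f ω| * |g ω| ∂P ≤ √(∫ ω, f ω ^ 2 ∂P) * √(∫ ω, g ω ^ 2 ∂P) := by
  have h_rpow : ∀ a : ℝ, |a| ^ (2 : ℝ) = a ^ 2 := fun a => by
    rw [Real.rpow_two, sq_abs]
  have h_holder := integral_mul_le_Lp_mul_Lq_of_nonneg Real.HolderConjugate.two_two
    (Filter.Eventually.of_forall fun ω => abs_nonneg (f ω))
    (Filter.Eventually.of_forall fun ω => abs_nonneg (g ω))
    (by rw [ENNReal.ofReal_ofNat]; exact hf.abs) (by rw [ENNReal.ofReal_ofNat]; exact hg.abs)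
  simp_rw [h_rpow] at h_holder
  rwa [Real.sqrt_eq_rpow, Real.sqrt_eq_rpow]

lemma integral_relu_mul_relu_le {f g : Ω → ℝ} (hf : MemLp f 2 P) (hg : MemLp g 2 P) (c : ℝ) :
    ∫ ω, relu (c * f ω) * relu (g ω) ∂P
      ≤ |c| * √(∫ ω, f ω ^ 2 ∂P) * √(∫ ω, g ω ^ 2 ∂P) := by
  have h_relu_le_abs : ∀ z, relu z ≤ |z| := fun z => max_le (abs_nonneg z) (le_abs_self z)
  have h_relu_nonneg : ∀ z, 0 ≤ relu z := fun z => le_max_left 0 z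
  have h_bound : ∀ ω, relu (c * f ω) * relu (g ω) ≤ |c| * (|f ω| * |g ω|) := fun ω => by
    rw [← mul_assoc, ← abs_mul]
    exact mul_le_mul (h_relu_le_abs _) (h_relu_le_abs _) (h_relu_nonneg _) (abs_nonneg _)
  have h_int : Integrable (fun ω => |c| * (|f ω| * |g ω|)) P :=
    (hf.abs.integrable_mul hg.abs).const_mul _
  calc ∫ ω, relu (c * f ω) * relu (g ω) ∂P ≤ ∫ ω, |c| * (|f ω| * |g ω|) ∂P := by
        refine integral_mono_of_nonneg (Filter.Eventually.of_forall fun ω => ?_) h_int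
          (Filter.Eventually.of_forall h_bound)
        exact mul_nonneg (h_relu_nonneg _) (h_relu_nonneg _)
    _ ≤ |c| * (√(∫ ω, f ω ^ 2 ∂P) * √(∫ ω, g ω ^ 2 ∂P)) := by
        rw [integral_const_mul]
        exact mul_le_mul_of_nonneg_left (integral_abs_mul_abs_le_sqrt_mul_sqrt hf hg)
          (abs_nonneg c)
    _ = |c| * √(∫ ω, f ω ^ 2 ∂P) * √(∫ ω, g ω ^ 2 ∂P) := (mul_assoc _ _ _).symm

end CauchySchwarz

theorem relu_condmean_cross_bound_general {Ω : Type*} (G : MeasurableSpace Ω)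
    {mΩ : MeasurableSpace Ω} [StandardBorelSpace Ω] (hG : G ≤ mΩ)
    (P : Measure Ω) [IsProbabilityMeasure P]
    (W : ℕ → Ω → ℝ) (hWmeas : ∀ i, Measurable (W i)) (hL2 : ∀ i, MemLp (W i) 2 P)
    (hiid : CondIID G hG P W)
    (m : ℕ) (x : Fin m → ℝ) (hx : ∑ i, x i ^ 2 = 1) (c : ℝ) :
    (∫ ω, relu (c * (P[W 0|G]) ω) *
        relu (∑ i : Fin m, (W i ω - (P[W 0|G]) ω) * x i) ∂P
      ≤ |c| * Real.sqrt (∫ ω, ((P[W 0|G]) ω) ^ 2 ∂P) *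
          Real.sqrt ((∫ ω, (W 0 ω) ^ 2 ∂P) - ∫ ω, ((P[W 0|G]) ω) ^ 2 ∂P)) ∧
    (∫ ω, ((P[W 0|G]) ω) ^ 2 ∂P = ∫ ω, W 0 ω * W 1 ω ∂P) ∧
    (∫ ω, relu (c * (P[W 0|G]) ω) *
        relu (∑ i : Fin m, (W i ω - (P[W 0|G]) ω) * x i) ∂P
      ≤ |c| * Real.sqrt (∫ ω, W 0 ω * W 1 ω ∂P) *
          Real.sqrt ((∫ ω, (W 0 ω) ^ 2 ∂P) - ∫ ω, W 0 ω * W 1 ω ∂P)) := by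
  set M := P[W 0|G]
  have hM : MemLp M 2 P := (hL2 0).condExp one_le_two
  have hcond : ∀ i, P[W i|G] =ᵐ[P] M :=
    hiid.condExp_ae_eq hWmeas fun i => (hL2 i).integrable one_le_two
  have h_cov : ∀ i j : Fin m, ∫ ω, (W i ω - M ω) * (W j ω - M ω) ∂P
      = if i = j then ∫ ω, W 0 ω ^ 2 ∂P - ∫ ω, M ω ^ 2 ∂P else 0 := by
    intro i j
    rw [integral_sub_mul_sub_of_condExp_ae_eq hG (hL2 i) (hL2 j) hM stronglyMeasurable_condExp
      (hcond i) (hcond j)]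
    split_ifs with hij
    · subst hij
      simp_rw [← sq]
      exact congrArg (· - _)
        ((hiid.identDistrib hWmeas i).comp (continuous_pow 2).measurable).integral_eq
    · rw [hiid.integral_mul_eq hWmeas hL2 (Fin.val_injective.ne hij), sub_self]
  have h_var : ∫ ω, (∑ i : Fin m, (W i ω - M ω) * x i) ^ 2 ∂P
      = ∫ ω, W 0 ω ^ 2 ∂P - ∫ ω, M ω ^ 2 ∂P := by
    rw [integral_sum_mul_sq_of_orthogonal (Y := fun (i : Fin m) ω => W i ω - M ω)
      (fun i => (hL2 i).sub hM) h_cov x, hx, mul_one]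
  have hS : MemLp (fun ω => ∑ i : Fin m, (W i ω - M ω) * x i) 2 P :=
    memLp_finsetSum _ fun i _ => ((hL2 i).sub hM).mul_const (x i)
  have h_bound := integral_relu_mul_relu_le hM hS c
  rw [h_var] at h_bound
  have h_M_sq : ∫ ω, M ω ^ 2 ∂P = ∫ ω, W 0 ω * W 1 ω ∂P :=
    (hiid.integral_mul_eq hWmeas hL2 zero_ne_one).symm
  exact ⟨h_bound, h_M_sq, h_M_sq ▸ h_bound⟩

/-- For a conditionally IID sequence with conditional mean `M = E[W₁|G]`,
`E[σ(c·M) σ(Σᵢ (Wᵢ − M) x̂ᵢ)] ≤ |c| √(E[M²]) √(E[W₁²] − E[M²])`, and moreover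
`E[M²] = E[W₁W₂]`, so the bound equals `|c| √(E[W₁W₂]) √(E[W₁²] − E[W₁W₂])`. -/
theorem relu_condmean_cross_bound {Ω : Type*} (G : MeasurableSpace Ω)
    {mΩ : MeasurableSpace Ω} [StandardBorelSpace Ω] (hG : G ≤ mΩ)
    (P : Measure Ω) [IsProbabilityMeasure P]
    (W : ℕ → Ω → ℝ) (hWmeas : ∀ i, Measurable (W i)) (hL2 : ∀ i, MemLp (W i) 2 P)
    (hiid : CondIID G hG P W)
    (m : ℕ) (hm : 1 ≤ m) (x : Fin m → ℝ) (hx : ∑ i, x i ^ 2 = 1) (c : ℝ) :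
    (∫ ω, relu (c * (P[W 0|G]) ω) *
        relu (∑ i : Fin m, (W i ω - (P[W 0|G]) ω) * x i) ∂P
      ≤ |c| * Real.sqrt (∫ ω, ((P[W 0|G]) ω) ^ 2 ∂P) *
          Real.sqrt ((∫ ω, (W 0 ω) ^ 2 ∂P) - ∫ ω, ((P[W 0|G]) ω) ^ 2 ∂P)) ∧
    (∫ ω, ((P[W 0|G]) ω) ^ 2 ∂P = ∫ ω, W 0 ω * W 1 ω ∂P) ∧
    (∫ ω, relu (c * (P[W 0|G]) ω) *
        relu (∑ i : Fin m, (W i ω - (P[W 0|G]) ω) * x i) ∂P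
      ≤ |c| * Real.sqrt (∫ ω, W 0 ω * W 1 ω ∂P) *
          Real.sqrt ((∫ ω, (W 0 ω) ^ 2 ∂P) - ∫ ω, W 0 ω * W 1 ω ∂P)) :=
  relu_condmean_cross_bound_general G hG P W hWmeas hL2 hiid m x hx c
end
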